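/- Let P : Cᵒᵖ → Pos be a primary doctrine that is universal, X an object of C and φ ∈ P(X). For objects B, C define (∀_{X,φ})^B_C(β) := ∀^B_{X×C}(β) ∧ P(pr₁)(φ) for β ∈ P(X×C×B)_{↓P(pr₁)(φ)}. Then: (i) (∀_{X,φ})^B_C is right adjoint to the reindexing P_(X,φ)(pr₁) = P(⟨pr₁,pr₂⟩) : P(X×C)_{↓P(pr₁)(φ)} → P(X×C×B)_{↓P(pr₁)(φ)}; (ii) the Beck–Chevalley condition holds: for every C_X-morphism f₂ : C' ⇝ C, writing f = ⟨pr₁,f₂⟩ : X×C' → X×C, one has P(f)((∀_{X,φ})^B_C(β)) = (∀_{X,φ})^B_{C'}(P(f×id_B)(β)); (iii) 𝔣_C(∀^B_C(β)) = (∀_{X,φ})^B_C(𝔣_{C×B}(β)) for every β ∈ P(C×B); (iv) if moreover the universal quantifier of P satisfies Frobenius reciprocity (P(pr₁)(γ ∧ ∀^B_C(β)) = P(pr₁)(γ) ∧ β), then so does (∀_{X,φ}). -/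

import Mathlib

open CategoryTheory CategoryTheory.Limits

universe w w' v u v' u'

/-- A primary doctrine: a functor `Cᵒᵖ → Pos` (given by the fibers `obj` together with the
reindexing maps `map`) on a category `C` with finite products, such that every fiber is an
inf-semilattice with a top element and every reindexing preserves binary meets and top. -/
structure PrimaryDoctrine (C : Type u) [Category.{v} C] where
  obj : C → Type w
  [sl : ∀ A, SemilatticeInf (obj A)]
  [tp : ∀ A, OrderTop (obj A)]
  map : ∀ {A B : C}, (A ⟶ B) → obj B → obj A
  map_id : ∀ (A : C) (α : obj A), map (𝟙 A) α = α
  map_comp : ∀ {A B D : C} (f : A ⟶ B) (g : B ⟶ D) (α : obj D),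
      map (f ≫ g) α = map f (map g α)
  map_inf : ∀ {A B : C} (f : A ⟶ B) (α β : obj B), map f (α ⊓ β) = map f α ⊓ map f β
  map_top : ∀ {A B : C} (f : A ⟶ B), map f (⊤ : obj B) = ⊤

attribute [instance] PrimaryDoctrine.sl PrimaryDoctrine.tp

/-- The component at `A` of the natural transformation `𝔣 : P ⟶ P_(X,φ) ∘ F_Xᵒᵖ`,
`𝔣_A(α) = P(pr₁)(φ) ⊓ P(pr₂)(α) ∈ P(X ⨯ A)`. -/
noncomputable def PrimaryDoctrine.frak {C : Type u} [Category.{v} C] [HasFiniteProducts C]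
    (P : PrimaryDoctrine.{w} C) {X : C} (φ : P.obj X) (A : C) (α : P.obj A) :
    P.obj (X ⨯ A) :=
  P.map prod.fst φ ⊓ P.map prod.snd α

/-- Universal structure on a doctrine: for all objects `B, A` a right adjoint
`∀^B_A : P(A ⨯ B) → P(A)` to `P(pr₁)`, satisfying the Beck–Chevalley condition. -/
structure PrimaryDoctrine.UniversalData {C : Type u} [Category.{v} C] [HasFiniteProducts C]
    (P : PrimaryDoctrine.{w} C) where
  all : ∀ (B A : C), P.obj (A ⨯ B) → P.obj A
  adj : ∀ {B A : C} (α : P.obj (A ⨯ B)) (β : P.obj A),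
      P.map (prod.fst : A ⨯ B ⟶ A) β ≤ α ↔ β ≤ all B A α
  bc : ∀ {B A A' : C} (f : A' ⟶ A) (α : P.obj (A ⨯ B)),
      P.map f (all B A α) = all B A' (P.map (prod.map f (𝟙 B)) α)

/-- The universal quantifier `(∀_{X,φ})^B_C(β) = ∀^B_{X ⨯ C}(β) ⊓ P(pr₁)(φ)` of `P_(X,φ)`
(up to the associativity isomorphism `(X ⨯ C) ⨯ B ≅ X ⨯ (C ⨯ B)`). -/
noncomputable def PrimaryDoctrine.UniversalData.allX {C : Type u} [Category.{v} C]
    [HasFiniteProducts C] {P : PrimaryDoctrine.{w} C} (U : P.UniversalData)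
    (X : C) (φ : P.obj X) (Cc B : C) (β : P.obj (X ⨯ (Cc ⨯ B))) : P.obj (X ⨯ Cc) :=
  U.all B (X ⨯ Cc) (P.map (prod.associator X Cc B).hom β) ⊓ P.map prod.fst φ

section Aux

variable {C : Type u} [Category.{v} C]

theorem PrimaryDoctrine.mono (P : PrimaryDoctrine.{w} C) {A B : C} (f : A ⟶ B)
    {α β : P.obj B} (h : α ≤ β) : P.map f α ≤ P.map f β := by
  have h' : α ⊓ β = α := inf_eq_left.mpr h
  have : P.map f α ⊓ P.map f β = P.map f α := by rw [← P.map_inf, h']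
  exact inf_eq_left.mp this

theorem PrimaryDoctrine.map_iso_le_iff (P : PrimaryDoctrine.{w} C) {A B : C} (e : A ≅ B)
    (α : P.obj A) (β : P.obj B) : P.map e.inv α ≤ β ↔ α ≤ P.map e.hom β := by
  constructor
  · intro h
    have h1 : α = P.map e.hom (P.map e.inv α) := by
      rw [← P.map_comp, e.hom_inv_id, P.map_id]
    rw [h1]
    exact P.mono e.hom h
  · intro h
    have h1 : β = P.map e.inv (P.map e.hom β) := by
      rw [← P.map_comp, e.inv_hom_id, P.map_id]
    rw [h1]
    exact P.mono e.inv h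

theorem PrimaryDoctrine.UniversalData.counit [HasFiniteProducts C]
    {P : PrimaryDoctrine.{w} C} (U : P.UniversalData) {B A : C} (α : P.obj (A ⨯ B)) :
    P.map (prod.fst : A ⨯ B ⟶ A) (U.all B A α) ≤ α :=
  (U.adj α (U.all B A α)).mpr le_rfl

theorem PrimaryDoctrine.UniversalData.all_mono [HasFiniteProducts C]
    {P : PrimaryDoctrine.{w} C} (U : P.UniversalData) {B A : C} {α α' : P.obj (A ⨯ B)}
    (h : α ≤ α') : U.all B A α ≤ U.all B A α' :=
  (U.adj α' (U.all B A α)).mp ((U.counit α).trans h)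

theorem assoc_hom_comp_map_fst (X Cc B : C) [HasFiniteProducts C] :
    (prod.associator X Cc B).hom ≫ prod.map (𝟙 X) prod.fst =
      (prod.fst : (X ⨯ Cc) ⨯ B ⟶ X ⨯ Cc) := by
  apply Limits.prod.hom_ext <;> simp <;> erw [prod.lift_fst] <;> erw [prod.lift_snd]

theorem map_id_fst_eq (X Cc B : C) [HasFiniteProducts C] :
    (prod.map (𝟙 X) prod.fst : X ⨯ (Cc ⨯ B) ⟶ X ⨯ Cc) =
      (prod.associator X Cc B).inv ≫ prod.fst := by
  rw [← assoc_hom_comp_map_fst, Iso.inv_hom_id_assoc]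

end Aux

/-- If `P` is universal then so is `P_(X,φ)`, with universal quantifiers
`(∀_{X,φ})^B_C(β) := ∀^B_{X ⨯ C}(β) ⊓ P(pr₁)(φ)`, and `(F_X, 𝔣)` is a universal morphism;
moreover Frobenius reciprocity for `∀` is inherited. -/
theorem pXphi_universal {C : Type u} [Category.{v} C] [HasFiniteProducts C]
    (P : PrimaryDoctrine.{w} C) (X : C) (φ : P.obj X) (U : P.UniversalData) :
    -- `(∀_{X,φ})^B_C` lands in the downset
    (∀ (Cc B : C) (β : P.obj (X ⨯ (Cc ⨯ B))), U.allX X φ Cc B β ≤ P.map prod.fst φ) ∧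
    -- (i) it is right adjoint to the reindexing `P_(X,φ)(pr₁) = P(⟨pr₁,pr₂⟩)`
    (∀ (Cc B : C) (β : P.obj (X ⨯ (Cc ⨯ B))) (γ : P.obj (X ⨯ Cc)),
      β ≤ P.map prod.fst φ → γ ≤ P.map prod.fst φ →
      (P.map (prod.map (𝟙 X) prod.fst) γ ≤ β ↔ γ ≤ U.allX X φ Cc B β)) ∧
    -- (ii) Beck–Chevalley: for every `C_X`-morphism `f₂ : C' ⇝ C`, with
    -- `f = ⟨pr₁, f₂⟩ : X ⨯ C' ⟶ X ⨯ C`,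
    -- `P(f)((∀_{X,φ})^B_C(β)) = (∀_{X,φ})^B_{C'}(P(f × id_B)(β))`
    (∀ (Cc Cc' B : C) (f₂ : (X ⨯ Cc' : C) ⟶ Cc) (β : P.obj (X ⨯ (Cc ⨯ B))),
      β ≤ P.map prod.fst φ →
      P.map (prod.lift prod.fst f₂) (U.allX X φ Cc B β)
        = U.allX X φ Cc' B
            (P.map ((prod.associator X Cc' B).inv
                ≫ prod.map (prod.lift prod.fst f₂) (𝟙 B)
                ≫ (prod.associator X Cc B).hom) β)) ∧
    -- (iii) `(F_X, 𝔣)` is universal: `𝔣_C(∀^B_C(β)) = (∀_{X,φ})^B_C(𝔣_{C ⨯ B}(β))`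
    (∀ (Cc B : C) (β : P.obj (Cc ⨯ B)),
      P.frak φ Cc (U.all B Cc β) = U.allX X φ Cc B (P.frak φ (Cc ⨯ B) β)) ∧
    -- (iv) if the universal quantifier of `P` satisfies Frobenius reciprocity, so does
    -- that of `P_(X,φ)`
    ((∀ (B A : C) (γ : P.obj A) (β : P.obj (A ⨯ B)),
        P.map (prod.fst : A ⨯ B ⟶ A) (γ ⊓ U.all B A β)
          = P.map (prod.fst : A ⨯ B ⟶ A) γ ⊓ β) →
      ∀ (Cc B : C) (γ : P.obj (X ⨯ Cc)) (β : P.obj (X ⨯ (Cc ⨯ B))),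
        γ ≤ P.map prod.fst φ → β ≤ P.map prod.fst φ →
        P.map (prod.map (𝟙 X) prod.fst) (γ ⊓ U.allX X φ Cc B β)
          = P.map (prod.map (𝟙 X) prod.fst) γ ⊓ β) := by
  refine ⟨fun Cc B β => inf_le_right, ?_, ?_, ?_, ?_⟩
  · -- (i) adjunction
    intro Cc B β γ hβ hγ
    set a := prod.associator X Cc B with ha
    rw [map_id_fst_eq, P.map_comp]
    rw [P.map_iso_le_iff a (P.map prod.fst γ) β, U.adj]
    unfold PrimaryDoctrine.UniversalData.allX
    rw [le_inf_iff]
    exact (and_iff_left hγ).symm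
  · -- (ii) Beck–Chevalley
    intro Cc Cc' B f₂ β hβ
    set a := prod.associator X Cc B with ha
    set a' := prod.associator X Cc' B with ha'
    set f := prod.lift (prod.fst : X ⨯ Cc' ⟶ X) f₂ with hf
    unfold PrimaryDoctrine.UniversalData.allX
    rw [P.map_inf]
    congr 1
    · rw [U.bc, ← P.map_comp]
      congr 1
      rw [← P.map_comp, Iso.hom_inv_id_assoc]
    · rw [← P.map_comp, prod.lift_fst]
  · -- (iii) 𝔣 commutes with ∀
    intro Cc B β
    unfold PrimaryDoctrine.UniversalData.allX PrimaryDoctrine.frak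
    set a := prod.associator X Cc B with ha
    have e1 : a.hom ≫ (prod.fst : X ⨯ (Cc ⨯ B) ⟶ X) = prod.fst ≫ prod.fst := by
      simp [ha]; erw [prod.lift_fst]
    have e2 : a.hom ≫ (prod.snd : X ⨯ (Cc ⨯ B) ⟶ Cc ⨯ B) = prod.map prod.snd (𝟙 B) := by
      apply Limits.prod.hom_ext
      · simp [ha]; erw [prod.lift_snd_assoc, prod.lift_fst]
      · simp [ha]; erw [prod.lift_snd_assoc, prod.lift_snd]
    have hmap : P.map a.hom (P.map prod.fst φ ⊓ P.map prod.snd β)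
        = P.map (prod.fst ≫ prod.fst) φ ⊓ P.map (prod.map prod.snd (𝟙 B)) β := by
      rw [P.map_inf, ← P.map_comp, ← P.map_comp, e1, e2]
    rw [hmap]
    apply le_antisymm
    · refine le_inf ?_ inf_le_left
      rw [← U.adj, P.map_inf]
      refine inf_le_inf ?_ ?_
      · rw [← P.map_comp]
      · rw [← P.map_comp]
        have h1 : (prod.fst ≫ prod.snd : (X ⨯ Cc) ⨯ B ⟶ Cc)
            = prod.map prod.snd (𝟙 B) ≫ prod.fst := by
          simp
        rw [h1, P.map_comp]
        exact P.mono _ (U.counit β)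
    · refine le_inf inf_le_right ?_
      refine inf_le_left.trans ?_
      have h2 : P.map (prod.snd : X ⨯ Cc ⟶ Cc) (U.all B Cc β)
          = U.all B (X ⨯ Cc) (P.map (prod.map prod.snd (𝟙 B)) β) := U.bc _ _
      rw [h2]
      exact U.all_mono inf_le_right
  · -- (iv) Frobenius
    intro hFrob Cc B γ β hγ hβ
    unfold PrimaryDoctrine.UniversalData.allX
    set a := prod.associator X Cc B with ha
    have h1 : γ ⊓ (U.all B (X ⨯ Cc) (P.map a.hom β) ⊓ P.map prod.fst φ)
        = γ ⊓ U.all B (X ⨯ Cc) (P.map a.hom β) := by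
      rw [inf_comm (U.all B (X ⨯ Cc) (P.map a.hom β)), ← inf_assoc,
        inf_eq_left.mpr hγ]
    rw [h1, map_id_fst_eq, P.map_comp, P.map_comp, hFrob, P.map_inf,
      ← P.map_comp, ← P.map_comp, a.inv_hom_id, P.map_id]
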